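/- (Heisler) Let X be a real Banach space and let A, B : X ⇉ X* be maximal monotone operators with dom A = dom B = X. Then A + B is maximal monotone. -/

import Mathlib

open Set Filter Pointwise

noncomputable section

variable {X : Type*}

abbrev Dual' (X : Type*) [NormedAddCommGroup X] [NormedSpace ℝ X] := X →L[ℝ] ℝ

section Defs
variable [NormedAddCommGroup X] [NormedSpace ℝ X]

/-- `A` is a monotone operator. -/
def MonotoneOp (A : X → Set (Dual' X)) : Prop :=
  ∀ x y (x' y' : Dual' X), x' ∈ A x → y' ∈ A y → 0 ≤ (x' - y') (x - y)

/-- `A` is maximal monotone: monotone, and every monotonically related pair is in the graph. -/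
def MaxMonotone (A : X → Set (Dual' X)) : Prop :=
  MonotoneOp A ∧
    ∀ x (x' : Dual' X), (∀ y y', y' ∈ A y → 0 ≤ (x' - y') (x - y)) → x' ∈ A x

/-- domain of a set-valued operator -/
def domOp (A : X → Set (Dual' X)) : Set X := {x | (A x).Nonempty}

/-- pointwise Minkowski sum of two set-valued operators -/
def opSum (A B : X → Set (Dual' X)) : X → Set (Dual' X) := fun x => A x + B x

/-- normal cone operator of a set `C` -/
def normalCone (C : Set X) : X → Set (Dual' X) :=
  fun x => {x' | x ∈ C ∧ ∀ c ∈ C, x' (c - x) ≤ 0}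

/-- the Fitzpatrick function of `A` -/
def fitz (A : X → Set (Dual' X)) : X × Dual' X → EReal :=
  fun p => ⨆ q ∈ {q : X × Dual' X | q.2 ∈ A q.1},
    ((q.2 p.1 + p.2 q.1 - q.2 q.1 : ℝ) : EReal)

/-- `A` is maximal monotone of type (FPV) -/
def FPV (A : X → Set (Dual' X)) : Prop :=
  MaxMonotone A ∧
    ∀ U : Set X, IsOpen U → Convex ℝ U → (U ∩ domOp A).Nonempty →
      ∀ x (x' : Dual' X), x ∈ U →
        (∀ y y', y' ∈ A y → y ∈ U → 0 ≤ (x' - y') (x - y)) → x' ∈ A x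

/-- `A` is a linear relation: its graph is a linear subspace of `X × X*` -/
def LinearRel (A : X → Set (Dual' X)) : Prop :=
  (0 : Dual' X) ∈ A 0 ∧
  (∀ x y (x' y' : Dual' X), x' ∈ A x → y' ∈ A y → x' + y' ∈ A (x + y)) ∧
  (∀ (c : ℝ) x (x' : Dual' X), x' ∈ A x → c • x' ∈ A (c • x))

/-- subdifferential of an extended-real-valued function -/
def subdiff (f : X → EReal) : X → Set (Dual' X) :=
  fun x => {x' | ∀ y, ((x' (y - x) : ℝ) : EReal) + f x ≤ f y}

/-- `f` is proper: never `⊥` and not identically `⊤` -/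
def ProperFun (f : X → EReal) : Prop := (∀ x, f x ≠ ⊥) ∧ ∃ x, f x ≠ ⊤

/-- convexity for extended-real-valued functions -/
def EConvexOn (f : X → EReal) : Prop :=
  ∀ x y (t : ℝ), 0 ≤ t → t ≤ 1 →
    f (t • x + (1 - t) • y) ≤ (t : EReal) * f x + ((1 - t : ℝ) : EReal) * f y

/-- effective domain of an extended-real-valued function -/
def domFun (f : X → EReal) : Set X := {x | f x ≠ ⊤}

end Defs

/-!
A monotone operator with full domain on a Banach space is locally bounded, by Baire's
theorem. Let `x'` be monotonically related to the whole graph of `A + B` at `x`. Approaching `x`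
along a ray `x + t • z`, `t ↓ 0`, bounded selections of `A` and `B` have weak-* limits
`a ∈ A x`, `b ∈ B x` with `x' z ≤ a z + b z`. So no weak-* continuous functional, i.e. no
evaluation at a point `z`, separates `x'` from the weak-* compact convex set
`(A x ∩ K) + (B x ∩ K)` (`K` a dual ball), and Hahn–Banach puts `x'` in `A x + B x`.
-/

open Topology

section Baire

variable {E ι : Type*} [TopologicalSpace E] [AddCommGroup E] [Module ℝ E]
  [IsTopologicalAddGroup E] [ContinuousSMul ℝ E] [BaireSpace E]

theorem exists_eventually_forall_le_of_convexOn {f : ι → E → ℝ}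
    (hcont : ∀ i, Continuous (f i)) (hconv : ∀ i, ConvexOn ℝ univ (f i))
    (hbdd : ∀ x, ∃ C, ∀ i, f i x ≤ C) (x₀ : E) :
    ∃ C, ∀ᶠ x in 𝓝 x₀, ∀ i, f i x ≤ C := by
  set S : ℕ → Set E := fun n => ⋂ i, {x | f i x ≤ n}
  have hS_closed (n : ℕ) : IsClosed (S n) :=
    isClosed_iInter fun i => isClosed_le (hcont i) continuous_const
  have hS_cover (x : E) : ∃ n, x ∈ S n := by
    obtain ⟨C, hC⟩ := hbdd x
    obtain ⟨n, hn⟩ := exists_nat_ge C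
    exact ⟨n, mem_iInter.2 fun i => (hC i).trans hn⟩
  obtain ⟨n, x₁, hx₁⟩ := nonempty_interior_of_iUnion_of_closed hS_closed
    (iUnion_eq_univ_iff.2 hS_cover)
  set x₂ := (2 : ℝ) • x₀ - x₁
  obtain ⟨m, hx₂⟩ := hS_cover x₂
  -- `x` is the midpoint of `x₂` and `2 • x - x₂`, and the latter is in `interior (S n)`
  -- for `x` near `x₀`
  have hreflect : Tendsto (fun x => (2 : ℝ) • x - x₂) (𝓝 x₀) (𝓝 x₁) := by
    have h : Continuous fun x : E => (2 : ℝ) • x - x₂ := by fun_prop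
    simpa [x₂] using h.tendsto x₀
  refine ⟨(n + m) / 2, ?_⟩
  filter_upwards [hreflect (isOpen_interior.mem_nhds hx₁)] with x hx i
  have hmid : (1 / 2 : ℝ) • ((2 : ℝ) • x - x₂) + (1 / 2 : ℝ) • x₂ = x := by module
  have h : f i ((1 / 2 : ℝ) • ((2 : ℝ) • x - x₂) + (1 / 2 : ℝ) • x₂)
      ≤ (1 / 2 : ℝ) • f i ((2 : ℝ) • x - x₂) + (1 / 2 : ℝ) • f i x₂ :=
    (hconv i).2 (mem_univ _) (mem_univ _) (by norm_num) (by norm_num) (by norm_num)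
  rw [hmid, smul_eq_mul, smul_eq_mul] at h
  have h₁ : f i ((2 : ℝ) • x - x₂) ≤ n := mem_iInter.1 (interior_subset hx) i
  have h₂ : f i x₂ ≤ m := mem_iInter.1 hx₂ i
  linarith

end Baire

theorem ContinuousLinearMap.norm_le_of_forall_apply_le {E : Type*} [NormedAddCommGroup E]
    [NormedSpace ℝ E] (f : StrongDual ℝ E) {r C : ℝ} (hr : 0 < r)
    (h : ∀ v ∈ Metric.closedBall (0 : E) r, f v ≤ C) : ‖f‖ ≤ C / r :=
  f.opNorm_bound_of_ball_bound hr C fun v hv => by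
    have hneg := h (-v) (by simpa using hv)
    rw [map_neg] at hneg
    exact abs_le.2 ⟨by linarith, h v hv⟩

section

variable [NormedAddCommGroup X] [NormedSpace ℝ X]

theorem MonotoneOp.exists_eventually_norm_le [CompleteSpace X] {A : X → Set (Dual' X)}
    (hA : MonotoneOp A) (hdom : domOp A = univ) (x₀ : X) :
    ∃ M, ∀ᶠ y in 𝓝 x₀, ∀ a ∈ A y, ‖a‖ ≤ M := by
  set ι := {p : X × Dual' X // p.2 ∈ A p.1 ∧ p.1 ∈ Metric.closedBall x₀ 1}
  have hbdd (x : X) : ∃ C, ∀ p : ι, p.1.2 (x - p.1.1) ≤ C := by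
    obtain ⟨b, hb⟩ : x ∈ domOp A := hdom ▸ mem_univ x
    refine ⟨‖b‖ * (‖x - x₀‖ + 1), fun ⟨(z, a), ha, hz⟩ => ?_⟩
    have hmono := hA x z b a hb ha
    rw [sub_apply, sub_nonneg] at hmono
    have hxz : ‖x - z‖ ≤ ‖x - x₀‖ + 1 := by
      rw [Metric.mem_closedBall, dist_eq_norm, ← norm_neg, neg_sub] at hz
      linarith [norm_sub_le_norm_sub_add_norm_sub x x₀ z]
    calc a (x - z) ≤ b (x - z) := hmono
      _ ≤ ‖b‖ * ‖x - z‖ := (le_abs_self _).trans (b.le_opNorm _)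
      _ ≤ ‖b‖ * (‖x - x₀‖ + 1) := by gcongr
  have hconv (p : ι) : ConvexOn ℝ univ fun x => p.1.2 (x - p.1.1) := by
    refine ⟨convex_univ, fun x _ y _ s t _ _ hst => le_of_eq ?_⟩
    simp only [map_sub, map_add, map_smul, smul_eq_mul]
    linear_combination p.1.2 p.1.1 * hst
  obtain ⟨C, hC⟩ :=
    exists_eventually_forall_le_of_convexOn (fun p => by fun_prop) hconv hbdd x₀
  obtain ⟨ε, hε, hball⟩ := Metric.eventually_nhds_iff_ball.1 hC
  set r := min 1 (ε / 2)
  have hr : 0 < r := by positivity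
  refine ⟨C / r, Metric.eventually_nhds_iff_ball.2 ⟨r, hr, fun y hy a ha => ?_⟩⟩
  refine a.norm_le_of_forall_apply_le hr fun v hv => ?_
  rw [Metric.mem_ball] at hy
  rw [mem_closedBall_zero_iff] at hv
  have hyv : y + v ∈ Metric.ball x₀ ε := by
    rw [Metric.mem_ball, dist_eq_norm, add_sub_right_comm]
    linarith [norm_add_le (y - x₀) v, dist_eq_norm y x₀, min_le_right 1 (ε / 2)]
  have hy₁ : y ∈ Metric.closedBall x₀ 1 := (hy.trans_le (min_le_left _ _)).le
  simpa using hball (y + v) hyv ⟨(y, a), ha, hy₁⟩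

theorem MonotoneOp.opSum {A B : X → Set (Dual' X)} (hA : MonotoneOp A) (hB : MonotoneOp B) :
    MonotoneOp (opSum A B) := by
  rintro x y _ _ ⟨a, ha, b, hb, rfl⟩ ⟨a', ha', b', hb', rfl⟩
  have hA' := hA x y a a' ha ha'
  have hB' := hB x y b b' hb hb'
  simp only [sub_apply, add_apply] at hA' hB' ⊢
  linarith

theorem MaxMonotone.eq_iInter {A : X → Set (Dual' X)} (hA : MaxMonotone A) (x : X) :
    A x = ⋂ y, ⋂ y' ∈ A y, {a : Dual' X | y' (x - y) ≤ a (x - y)} := by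
  ext a
  simp only [mem_iInter, mem_ofPred_eq]
  refine ⟨fun ha y y' hy' => ?_, fun ha => hA.2 x a fun y y' hy' => ?_⟩
  · have hmono := hA.1 x y a y' ha hy'
    rwa [sub_apply, sub_nonneg] at hmono
  · rw [sub_apply, sub_nonneg]
    exact ha y y' hy'

theorem MaxMonotone.convex {A : X → Set (Dual' X)} (hA : MaxMonotone A) (x : X) :
    Convex ℝ (A x) := by
  rw [hA.eq_iInter x]
  exact convex_iInter fun y => convex_iInter₂ fun y' _ =>
    convex_halfSpace_ge ⟨fun _ _ => rfl, fun _ _ => rfl⟩ _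

section WeakStar

open WeakDual

theorem WeakDual.mem_of_forall_exists_apply_le {E : Type*} [TopologicalSpace E] [AddCommGroup E]
    [Module ℝ E] {S : Set (WeakDual ℝ E)} (hconv : Convex ℝ S) (hclosed : IsClosed S)
    {x' : WeakDual ℝ E} (h : ∀ z, ∃ w ∈ S, x' z ≤ w z) : x' ∈ S := by
  have : LocallyConvexSpace ℝ (WeakDual ℝ E) :=
    WeakBilin.locallyConvexSpace (B := topDualPairing ℝ E)
  by_contra hx'
  obtain ⟨f, u, hfS, hfx⟩ := geometric_hahn_banach_closed_point hconv hclosed hx'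
  -- weak-* continuous functionals are evaluations at points of `E`
  obtain ⟨z, rfl⟩ := LinearMap.dualEmbedding_surjective (topDualPairing ℝ E) f
  obtain ⟨w, hw, hle⟩ := h z
  have hw' : w z < u := hfS w hw
  have hx'' : u < x' z := hfx
  linarith

theorem MaxMonotone.isClosed_preimage_toStrongDual {A : X → Set (Dual' X)} (hA : MaxMonotone A)
    (x : X) : IsClosed (toStrongDual ⁻¹' A x) := by
  rw [hA.eq_iInter x]
  simp only [preimage_iInter]
  exact isClosed_iInter fun y => isClosed_biInter fun y' _ =>
    isClosed_le continuous_const (eval_continuous _)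

theorem mem_add_of_forall_exists_apply_le {P Q : Set (Dual' X)}
    (hP_closed : IsClosed (toStrongDual ⁻¹' P)) (hQ_closed : IsClosed (toStrongDual ⁻¹' Q))
    (hP_convex : Convex ℝ P) (hQ_convex : Convex ℝ Q) {x' : Dual' X} {M : ℝ}
    (h : ∀ z, ∃ a ∈ P, ∃ b ∈ Q, ‖a‖ ≤ M ∧ ‖b‖ ≤ M ∧ x' z ≤ a z + b z) : x' ∈ P + Q := by
  set K : Set (WeakDual ℝ X) := toStrongDual ⁻¹' Metric.closedBall 0 M
  have hK_compact : IsCompact K := isCompact_closedBall (𝕜 := ℝ) (E := X) 0 M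
  have hK_convex : Convex ℝ K :=
    (convex_closedBall (0 : Dual' X) M).linear_preimage toStrongDual.toLinearMap
  have hS_compact : IsCompact ((toStrongDual ⁻¹' P ∩ K) + (toStrongDual ⁻¹' Q ∩ K)) :=
    (hK_compact.inter_left hP_closed).add (hK_compact.inter_left hQ_closed)
  have hS_convex : Convex ℝ ((toStrongDual ⁻¹' P ∩ K) + (toStrongDual ⁻¹' Q ∩ K)) :=
    ((hP_convex.linear_preimage toStrongDual.toLinearMap).inter hK_convex).add
      ((hQ_convex.linear_preimage toStrongDual.toLinearMap).inter hK_convex)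
  obtain ⟨a, ⟨ha, -⟩, b, ⟨hb, -⟩, hab⟩ :=
    mem_of_forall_exists_apply_le hS_convex hS_compact.isClosed
      (x' := StrongDual.toWeakDual x') fun z => by
        obtain ⟨a, ha, b, hb, haM, hbM, hle⟩ := h z
        exact ⟨StrongDual.toWeakDual a + StrongDual.toWeakDual b, add_mem_add
          ⟨ha, mem_closedBall_zero_iff.2 haM⟩ ⟨hb, mem_closedBall_zero_iff.2 hbM⟩, hle⟩
  rw [← StrongDual.toStrongDual_toWeakDual x', ← hab]
  exact add_mem_add ha hb

theorem MaxMonotone.mem_of_tendsto_radial {A : X → Set (Dual' X)} (hA : MaxMonotone A)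
    {x z : X} {l : Filter ℝ} [l.NeBot] (hl : l ≤ 𝓝 0) {a : ℝ → Dual' X} {w : WeakDual ℝ X}
    (ha : ∀ᶠ t in l, a t ∈ A (x + t • z))
    (hw : Tendsto (fun t => StrongDual.toWeakDual (a t)) l (𝓝 w)) :
    toStrongDual w ∈ A x := by
  refine hA.2 x _ fun y y' hy' => ?_
  have hz : Tendsto (fun t : ℝ => y' (x + t • z - y)) l (𝓝 (y' (x - y))) := by
    simpa using ((by fun_prop : Continuous fun t : ℝ => y' (x + t • z - y)).tendsto 0).mono_left hl
  have hlim : Tendsto (fun t => a t (x - y) + t * a t z - y' (x + t • z - y)) l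
      (𝓝 (w (x - y) + 0 * w z - y' (x - y))) :=
    ((((eval_continuous (x - y)).tendsto w).comp hw).add
      ((tendsto_id.mono_left hl).mul (((eval_continuous z).tendsto w).comp hw))).sub hz
  rw [zero_mul, add_zero] at hlim
  rw [sub_apply]
  refine ge_of_tendsto hlim (ha.mono fun t ht => ?_)
  have hmono := hA.1 _ y _ y' ht hy'
  rw [sub_apply] at hmono
  simp only [map_sub, map_add, map_smul, smul_eq_mul] at hmono ⊢
  linarith

theorem MaxMonotone.exists_tendsto_radial {A : X → Set (Dual' X)} (hA : MaxMonotone A)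
    {x z : X} {M : ℝ} (hM : ∀ᶠ y in 𝓝 x, ∀ a ∈ A y, ‖a‖ ≤ M) {a : ℝ → Dual' X}
    (ha : ∀ t, a t ∈ A (x + t • z)) (U : Ultrafilter ℝ) (hU : (U : Filter ℝ) ≤ 𝓝 0) :
    ∃ w : WeakDual ℝ X, toStrongDual w ∈ A x ∧ ‖toStrongDual w‖ ≤ M ∧
      Tendsto (fun t => StrongDual.toWeakDual (a t)) U (𝓝 w) := by
  have hpath : Tendsto (fun t : ℝ => x + t • z) U (𝓝 x) := by
    simpa using ((by fun_prop : Continuous fun t : ℝ => x + t • z).tendsto 0).mono_left hU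
  have hbound : ∀ᶠ t in (U : Filter ℝ),
      StrongDual.toWeakDual (a t) ∈ toStrongDual ⁻¹' Metric.closedBall 0 M :=
    (hpath.eventually hM).mono fun t ht => by simpa using ht (a t) (ha t)
  obtain ⟨w, hwM, hw⟩ :=
    (isCompact_closedBall (𝕜 := ℝ) (E := X) 0 M).ultrafilter_le_nhds
      (U.map fun t => StrongDual.toWeakDual (a t)) (le_principal_iff.2 hbound)
  exact ⟨w, hA.mem_of_tendsto_radial hU (.of_forall ha) hw, mem_closedBall_zero_iff.1 hwM, hw⟩

theorem MaxMonotone.exists_apply_le_add_of_opSum {A B : X → Set (Dual' X)} (hA : MaxMonotone A)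
    (hB : MaxMonotone B) (hAdom : domOp A = univ) (hBdom : domOp B = univ) {x : X}
    {x' : Dual' X} {M : ℝ} (hMA : ∀ᶠ y in 𝓝 x, ∀ a ∈ A y, ‖a‖ ≤ M)
    (hMB : ∀ᶠ y in 𝓝 x, ∀ b ∈ B y, ‖b‖ ≤ M)
    (hx' : ∀ y c, c ∈ opSum A B y → 0 ≤ (x' - c) (x - y)) (z : X) :
    ∃ a ∈ A x, ∃ b ∈ B x, ‖a‖ ≤ M ∧ ‖b‖ ≤ M ∧ x' z ≤ a z + b z := by
  choose a ha using fun t : ℝ => (hAdom ▸ mem_univ (x + t • z) : x + t • z ∈ domOp A)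
  choose b hb using fun t : ℝ => (hBdom ▸ mem_univ (x + t • z) : x + t • z ∈ domOp B)
  -- a single ultrafilter makes both selections converge along the same filter
  set U := Ultrafilter.of (𝓝[>] (0 : ℝ))
  have hU : (U : Filter ℝ) ≤ 𝓝[>] 0 := Ultrafilter.of_le _
  have hU₀ : (U : Filter ℝ) ≤ 𝓝 0 := hU.trans nhdsWithin_le_nhds
  obtain ⟨wa, hwa, hwaM, hta⟩ := hA.exists_tendsto_radial hMA ha U hU₀
  obtain ⟨wb, hwb, hwbM, htb⟩ := hB.exists_tendsto_radial hMB hb U hU₀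
  refine ⟨_, hwa, _, hwb, hwaM, hwbM, ge_of_tendsto
    ((((eval_continuous z).tendsto wa).comp hta).add (((eval_continuous z).tendsto wb).comp htb))
    ?_⟩
  filter_upwards [hU self_mem_nhdsWithin] with t (ht : 0 < t)
  have h := hx' (x + t • z) (a t + b t) (add_mem_add (ha t) (hb t))
  simp only [sub_apply, add_apply, sub_add_cancel_left, map_neg, map_smul, smul_eq_mul] at h
  show x' z ≤ a t z + b t z
  nlinarith

end WeakStar

end

variable [NormedAddCommGroup X] [NormedSpace ℝ X] [CompleteSpace X]

theorem stmt10 (A B : X → Set (Dual' X)) (hA : MaxMonotone A) (hB : MaxMonotone B)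
    (hAfull : domOp A = Set.univ) (hBfull : domOp B = Set.univ) :
    MaxMonotone (opSum A B) := by
  refine ⟨hA.1.opSum hB.1, fun x x' hx' => ?_⟩
  obtain ⟨MA, hMA⟩ := hA.1.exists_eventually_norm_le hAfull x
  obtain ⟨MB, hMB⟩ := hB.1.exists_eventually_norm_le hBfull x
  exact mem_add_of_forall_exists_apply_le (hA.isClosed_preimage_toStrongDual x)
    (hB.isClosed_preimage_toStrongDual x) (hA.convex x) (hB.convex x)
    (hA.exists_apply_le_add_of_opSum hB hAfull hBfull
      (hMA.mono fun y h a ha => (h a ha).trans (le_max_left MA MB))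
      (hMB.mono fun y h b hb => (h b hb).trans (le_max_right MA MB)) hx')
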